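/- arXiv:1401.2665 — 4 statements merged into one kernel-verified Lean document; each statement's English description precedes it below -/
import Mathlib

section
/- Let r ≥ 1 and let Δ₁, …, Δ_r be positive real numbers. For every ε > 0 there exist positive integers k₁, …, k_r such that |Δ_i k_i − Δ_j k_j| < ε for all i, j ∈ {1, …, r}. -/
/-!
The points `q • (Δ₁⁻¹, …, Δ_r⁻¹)` of the compact torus `(ℝ/ℤ)ʳ` accumulate, so two of them are
close and their difference gives some `q > 0` with every `q / Δ_i` arbitrarily near an integer
`k_i`. Then every `Δ_i k_i` lies within `ε / 2` of the common value `q`, and `k_i > 0` because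
`q ≥ 1` while the error is below `1`.
-/

theorem exists_pos_nsmul_norm_lt {A : Type*} [SeminormedAddCommGroup A] [CompactSpace A]
    (ξ : A) {δ : ℝ} (hδ : 0 < δ) : ∃ q : ℕ, 0 < q ∧ ‖q • ξ‖ < δ := by
  obtain ⟨_, -, φ, hφ, hlim⟩ :=
    isCompact_univ.tendsto_subseq (x := fun n : ℕ ↦ n • ξ) fun _ ↦ Set.mem_univ _
  obtain ⟨N, hN⟩ := Metric.cauchySeq_iff'.mp hlim.cauchySeq δ hδ
  refine ⟨φ (N + 1) - φ N, Nat.sub_pos_of_lt (hφ N.lt_succ_self), ?_⟩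
  rw [sub_nsmul _ (hφ N.lt_succ_self).le, ← sub_eq_add_neg, ← dist_eq_norm]
  exact hN (N + 1) N.le_succ

theorem exists_pos_nat_forall_abs_mul_sub_lt {ι : Type*} [Fintype ι] (α : ι → ℝ) {δ : ℝ}
    (hδ : 0 < δ) : ∃ q : ℕ, 0 < q ∧ ∃ p : ι → ℤ, ∀ i, |q * α i - p i| < δ := by
  obtain ⟨q, hq, hξ⟩ := exists_pos_nsmul_norm_lt (fun i ↦ (α i : UnitAddCircle)) hδ
  refine ⟨q, hq, fun i ↦ round (q * α i), fun i ↦ ?_⟩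
  simpa [← UnitAddCircle.norm_eq] using (pi_norm_lt_iff hδ).mp hξ i

theorem exists_nat_forall_abs_mul_sub_lt {ι : Type*} [Fintype ι] {Δ : ι → ℝ}
    (hΔ : ∀ i, 0 < Δ i) {η : ℝ} (hη : 0 < η) (hη₁ : η ≤ 1) :
    ∃ (q : ℕ) (k : ι → ℕ), (∀ i, 0 < k i) ∧ ∀ i, |Δ i * k i - q| < η := by
  obtain ⟨M, hM⟩ := Finite.exists_le Δ
  have hM₁ : 0 < max M 1 := lt_max_of_lt_right one_pos
  obtain ⟨q, hq, p, hp⟩ :=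
    exists_pos_nat_forall_abs_mul_sub_lt (fun i ↦ (Δ i)⁻¹) (div_pos hη hM₁)
  have hclose : ∀ i, |Δ i * p i - q| < η := fun i ↦ calc
    |Δ i * p i - q| = |Δ i * (q * (Δ i)⁻¹ - p i)| := by
      rw [abs_sub_comm]; field_simp [(hΔ i).ne']
    _ = Δ i * |q * (Δ i)⁻¹ - p i| := by rw [abs_mul, abs_of_pos (hΔ i)]
    _ ≤ max M 1 * |q * (Δ i)⁻¹ - p i| := by
      gcongr
      exact (hM i).trans (le_max_left _ _)
    _ < max M 1 * (η / max M 1) := by gcongr; exact hp i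
    _ = η := mul_div_cancel₀ _ hM₁.ne'
  have hp_pos : ∀ i, 0 < p i := by
    intro i
    have : (0 : ℝ) < Δ i * p i := by
      have hq₁ : (1 : ℝ) ≤ q := by exact_mod_cast hq
      linarith [(abs_lt.mp (hclose i)).1]
    exact_mod_cast pos_of_mul_pos_right this (hΔ i).le
  lift p to ι → ℕ using fun i ↦ (hp_pos i).le
  exact ⟨q, p, fun i ↦ by simpa using hp_pos i, fun i ↦ by exact_mod_cast hclose i⟩

theorem perfect_reeb_stmt0_general (r : ℕ) (Δ : Fin r → ℝ)
    (hΔ : ∀ i, 0 < Δ i) (ε : ℝ) (hε : 0 < ε) :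
    ∃ k : Fin r → ℕ, (∀ i, 0 < k i) ∧
      ∀ i j, |Δ i * (k i : ℝ) - Δ j * (k j : ℝ)| < ε := by
  obtain ⟨q, k, hk, hclose⟩ := exists_nat_forall_abs_mul_sub_lt hΔ
    (lt_min (half_pos hε) one_pos) (min_le_right _ 1)
  refine ⟨k, hk, fun i j ↦ ?_⟩
  calc |Δ i * k i - Δ j * k j| ≤ |Δ i * k i - q| + |Δ j * k j - q| := by
        rw [abs_sub_comm (Δ j * k j)]; exact abs_sub_le _ _ _
    _ < ε / 2 + ε / 2 := add_lt_add ((hclose i).trans_le (min_le_left _ _))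
        ((hclose j).trans_le (min_le_left _ _))
    _ = ε := add_halves ε

/-- Simultaneous Diophantine approximation core of Lemma 3.1:
for positive reals `Δ₁, …, Δ_r` and any `ε > 0` there are positive integers
`k₁, …, k_r` with `|Δ_i k_i − Δ_j k_j| < ε` for all `i, j`. -/
theorem perfect_reeb_stmt0 (r : ℕ) (hr : 1 ≤ r) (Δ : Fin r → ℝ)
    (hΔ : ∀ i, 0 < Δ i) (ε : ℝ) (hε : 0 < ε) :
    ∃ k : Fin r → ℕ, (∀ i, 0 < k i) ∧
      ∀ i j, |Δ i * (k i : ℝ) - Δ j * (k j : ℝ)| < ε :=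
  perfect_reeb_stmt0_general r Δ hΔ ε hε
end

section
/- Let r ≥ 1, let c > 0 and ε > 0, let Δ₁, …, Δ_r be positive real numbers, and for each i ∈ {1, …, r} let μ_i : ℕ_{>0} → ℤ be a function satisfying |μ_i(k) − k·Δ_i| < c for all positive integers k. Then there exist positive integers k₁, …, k_r such that |μ_i(k_i) − μ_j(k_j)| < 2c + ε for all i, j ∈ {1, …, r}; in particular all the integers μ_1(k_1), …, μ_r(k_r) lie in an interval of length 2c + ε. -/
/-!
By simultaneous Dirichlet approximation (recurrence of `n • x` in the compact torus) there is a
positive integer `n` such that every `n / Δᵢ` lies within `ε / (2 Δᵢ)` of a positive integer `kᵢ`.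
Then all `kᵢ Δᵢ` lie within `ε / 2` of `n`, and each `μᵢ(kᵢ)` lies within `c` of `kᵢ Δᵢ`.
-/

open Filter Topology

theorem exists_pos_nsmul_mem_of_mem_nhds_zero {G : Type*} [AddCommGroup G] [TopologicalSpace G]
    [IsTopologicalAddGroup G] [CompactSpace G] (x : G) {U : Set G} (hU : U ∈ 𝓝 0) :
    ∃ n : ℕ, 0 < n ∧ n • x ∈ U := by
  obtain ⟨y, -, hy⟩ := isCompact_univ.exists_mapClusterPt (f := atTop)
    (u := fun n : ℕ => n • x) (by simp)
  have hsub : ∀ᶠ p in 𝓝 y ×ˢ 𝓝 y, p.1 - p.2 ∈ U := by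
    rw [← nhds_prod_eq]
    exact continuous_sub.tendsto' (y, y) 0 (sub_self y) hU
  obtain ⟨W, hW, hWU⟩ := mem_prod_self_iff.1 hsub
  obtain ⟨m, hm⟩ := (hy.frequently hW).exists
  obtain ⟨n, hmn, hn⟩ := frequently_atTop.1 (hy.frequently hW) (m + 1)
  refine ⟨n - m, by omega, ?_⟩
  rw [sub_nsmul x (by omega : m ≤ n), ← sub_eq_add_neg]
  exact hWU (Set.mk_mem_prod hn hm)

theorem exists_pos_nat_abs_mul_sub_round_lt {ι : Type*} [Finite ι] (ρ : ι → ℝ) {δ : ι → ℝ}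
    (hδ : ∀ i, 0 < δ i) : ∃ n : ℕ, 0 < n ∧ ∀ i, |n * ρ i - round (n * ρ i)| < δ i := by
  have hU : ∀ᶠ y : ι → UnitAddCircle in 𝓝 0, ∀ i, ‖y i‖ < δ i :=
    eventually_all.2 fun i =>
      ((continuous_apply i).norm.tendsto 0).eventually_lt_const (by simpa using hδ i)
  obtain ⟨n, hn, hnU⟩ := exists_pos_nsmul_mem_of_mem_nhds_zero (fun i => (ρ i : UnitAddCircle)) hU
  refine ⟨n, hn, fun i => ?_⟩
  have := hnU i
  rwa [Pi.smul_apply, ← AddCircle.coe_nsmul, nsmul_eq_mul, UnitAddCircle.norm_eq] at this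

theorem exists_pos_nat_forall_abs_mul_sub_lt_s1 {ι : Type*} [Finite ι] {Δ : ι → ℝ}
    (hΔ : ∀ i, 0 < Δ i) {η : ℝ} (hη : 0 < η) :
    ∃ T : ℝ, ∃ k : ι → ℕ, (∀ i, 0 < k i) ∧ ∀ i, |k i * Δ i - T| < η := by
  -- Capping the accuracy at `1` keeps the nearest integers to `n / Δ i` positive.
  obtain ⟨n, hn, happrox⟩ := exists_pos_nat_abs_mul_sub_round_lt (fun i => (Δ i)⁻¹)
    (δ := fun i => min η 1 / Δ i) fun i => div_pos (lt_min hη one_pos) (hΔ i)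
  set p : ι → ℤ := fun i => round (n * (Δ i)⁻¹)
  have hclose : ∀ i, |p i * Δ i - n| < min η 1 := fun i => by
    have : p i * Δ i - n = -((n * (Δ i)⁻¹ - p i) * Δ i) := by
      field_simp [(hΔ i).ne']
      ring
    rw [this, abs_neg, abs_mul, abs_of_pos (hΔ i), ← lt_div_iff₀ (hΔ i)]
    exact happrox i
  have hp : ∀ i, 0 < p i := fun i => by
    have h1 : (1 : ℝ) ≤ n := by exact_mod_cast hn
    have h2 := (abs_lt.1 (hclose i)).1
    have : (0 : ℝ) < p i * Δ i := by linarith [min_le_right η 1]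
    exact_mod_cast pos_of_mul_pos_left this (hΔ i).le
  clear_value p
  lift p to ι → ℕ using fun i => (hp i).le
  refine ⟨n, p, fun i => Int.natCast_pos.1 (hp i), fun i => ?_⟩
  exact_mod_cast (hclose i).trans_le (min_le_left η 1)

theorem perfect_reeb_stmt1_general (r : ℕ) (c ε : ℝ)
    (hε : 0 < ε) (Δ : Fin r → ℝ) (hΔ : ∀ i, 0 < Δ i)
    (μ : Fin r → ℕ → ℤ)
    (hμ : ∀ i, ∀ k : ℕ, 0 < k → |(μ i k : ℝ) - (k : ℝ) * Δ i| < c) :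
    ∃ k : Fin r → ℕ, (∀ i, 0 < k i) ∧
      ∀ i j, |(μ i (k i) : ℝ) - (μ j (k j) : ℝ)| < 2 * c + ε := by
  obtain ⟨T, k, hk, hkT⟩ := exists_pos_nat_forall_abs_mul_sub_lt_s1 hΔ (half_pos hε)
  refine ⟨k, hk, fun i j => ?_⟩
  have hi := abs_sub_lt_iff.1 (hμ i (k i) (hk i))
  have hj := abs_sub_lt_iff.1 (hμ j (k j) (hk j))
  have hTi := abs_sub_lt_iff.1 (hkT i)
  have hTj := abs_sub_lt_iff.1 (hkT j)
  rw [abs_sub_lt_iff]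
  constructor <;> linarith

/-- Abstract form of Lemma 3.1: if `μ_i(k)` is within `c` of `k·Δ_i` for all
positive `k`, then there are positive integers `k₁, …, k_r` such that all
`μ_i(k_i)` lie within `2c + ε` of each other. -/
theorem perfect_reeb_stmt1 (r : ℕ) (hr : 1 ≤ r) (c ε : ℝ) (hc : 0 < c)
    (hε : 0 < ε) (Δ : Fin r → ℝ) (hΔ : ∀ i, 0 < Δ i)
    (μ : Fin r → ℕ → ℤ)
    (hμ : ∀ i, ∀ k : ℕ, 0 < k → |(μ i k : ℝ) - (k : ℝ) * Δ i| < c) :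
    ∃ k : Fin r → ℕ, (∀ i, 0 < k i) ∧
      ∀ i j, |(μ i (k i) : ℝ) - (μ j (k j) : ℝ)| < 2 * c + ε :=
  perfect_reeb_stmt1_general r c ε hε Δ hΔ μ hμ
end

section
/- Let θ be a positive irrational real number, let d be an odd positive integer, and let μ : ℕ_{>0} → ℤ be a function taking only odd integer values and satisfying |μ(k) − k·θ| < 1 for all positive integers k. Then there exist a positive integer k and an odd positive integer j such that μ(k) = j·d. -/
/-!
By Kronecker's theorem the subgroup `ℤθ + 2dℤ` of `ℝ` is dense, so some `kθ` with `k > 0` lies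
within `1` of an odd multiple `jd`. Then `μ(k)` and `jd` are odd integers at distance `< 2`,
hence equal, and `j > 0` because `μ(k) > kθ - 1 > -1`.
-/

theorem Int.eq_of_odd_of_abs_sub_lt_two {a b : ℤ} (ha : Odd a) (hb : Odd b) (h : |a - b| < 2) :
    a = b := by
  obtain ⟨c, rfl⟩ := ha
  obtain ⟨e, rfl⟩ := hb
  rw [abs_lt] at h
  omega

theorem exists_int_abs_mul_sub_odd_mul_lt {θ a ε : ℝ} (h : Irrational (θ / (2 * a)))
    (hε : 0 < ε) : ∃ b j : ℤ, Odd j ∧ |b * θ - j * a| < ε := by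
  obtain ⟨s, hs, hsa⟩ := (dense_addSubgroupClosure_pair_iff.2 h).exists_mem_open isOpen_Ioo
    (Set.nonempty_Ioo.2 (by linarith : a - ε < a + ε))
  obtain ⟨b, l, rfl⟩ := AddSubgroup.mem_closure_pair.1 hs
  refine ⟨b, 1 - 2 * l, ⟨-l, by ring⟩, ?_⟩
  rw [Set.mem_Ioo, zsmul_eq_mul, zsmul_eq_mul] at hsa
  rw [abs_lt]
  push_cast
  constructor <;> linarith

theorem exists_pos_nat_abs_mul_sub_odd_mul_lt {θ a ε : ℝ} (h : Irrational (θ / (2 * a)))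
    (hε : 0 < ε) (hεa : ε ≤ |a|) : ∃ k : ℕ, 0 < k ∧ ∃ j : ℤ, Odd j ∧ |k * θ - j * a| < ε := by
  obtain ⟨b, j, hj, hbj⟩ := exists_int_abs_mul_sub_odd_mul_lt h hε
  have hb : b ≠ 0 := by
    rintro rfl
    have hj1 : (1 : ℝ) ≤ |(j : ℝ)| := by
      exact_mod_cast Int.one_le_abs (by rintro rfl; simp at hj)
    have : |a| ≤ |j * a| := by rw [abs_mul]; nlinarith [abs_nonneg a]
    simp only [Int.cast_zero, zero_mul, zero_sub, abs_neg] at hbj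
    linarith
  refine ⟨b.natAbs, Int.natAbs_pos.2 hb, ?_⟩
  rcases Int.natAbs_eq b with hpos | hneg
  · refine ⟨j, hj, ?_⟩
    rwa [hpos, Int.cast_natCast] at hbj
  · refine ⟨-j, hj.neg, ?_⟩
    rw [hneg, Int.cast_neg, Int.cast_natCast, ← abs_neg] at hbj
    push_cast
    convert hbj using 2
    ring

/-- Abstraction of the index-collision argument in the proof of Theorem 1.9:
if `θ > 0` is irrational, `d` is an odd positive integer, and `μ(k)` is an odd
integer with `|μ(k) − kθ| < 1` for all positive `k`, then some `μ(k)` is an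
odd positive multiple of `d`. -/
theorem perfect_reeb_stmt9 (θ : ℝ) (hθpos : 0 < θ) (hθirr : Irrational θ)
    (d : ℤ) (hd_odd : Odd d) (hd_pos : 0 < d) (μ : ℕ → ℤ)
    (hodd : ∀ k : ℕ, 0 < k → Odd (μ k))
    (hμ : ∀ k : ℕ, 0 < k → |(μ k : ℝ) - (k : ℝ) * θ| < 1) :
    ∃ k : ℕ, 0 < k ∧ ∃ j : ℤ, Odd j ∧ 0 < j ∧ μ k = j * d := by
  have hirr : Irrational (θ / (2 * d)) := by
    simpa using hθirr.div_intCast (m := 2 * d) (by omega)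
  obtain ⟨k, hk, j, hj, hkθ⟩ :=
    exists_pos_nat_abs_mul_sub_odd_mul_lt hirr one_pos
      (by exact_mod_cast Int.one_le_abs hd_pos.ne')
  have hμk := hμ k hk
  have hμ_eq : μ k = j * d := by
    refine Int.eq_of_odd_of_abs_sub_lt_two (hodd k hk) (hj.mul hd_odd) ?_
    have : |(μ k : ℝ) - j * d| < 2 := by
      calc |(μ k : ℝ) - j * d| ≤ |(μ k : ℝ) - k * θ| + |k * θ - j * d| := abs_sub_le _ _ _
        _ < 2 := by linarith
    exact_mod_cast this
  have hμ_pos : 0 < μ k := by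
    have : (-1 : ℝ) < μ k := by
      have : 0 < (k : ℝ) * θ := by positivity
      linarith [(abs_lt.1 hμk).1]
    obtain ⟨c, hc⟩ := hodd k hk
    have : (-1 : ℤ) < μ k := by exact_mod_cast this
    omega
  exact ⟨k, hk, j, hj, Int.pos_of_mul_pos_left (hμ_eq ▸ hμ_pos) hd_pos, hμ_eq⟩
end

section
/- Let r ≥ 1, let c > 0 and ε > 0, let Δ₁, …, Δ_r be positive real numbers such that the reciprocals 1/Δ₁, …, 1/Δ_r are linearly independent over ℚ, and for each i ∈ {1, …, r} let μ_i : ℕ_{>0} → ℤ be a function satisfying |μ_i(k) − k·Δ_i| < c for all positive integers k. Then there exist odd positive integers k₁, …, k_r such that |μ_i(k_i) − μ_j(k_j)| < 2c + ε for all i, j ∈ {1, …, r}. -/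
/-!
Every `μ i (k i)` is within `c` of `k i * Δ i`, so it suffices to find one real `T` lying within
`ε / 2` of an odd multiple of every `Δ i`, i.e. with `T / (2 Δ i)` close to `1 / 2` modulo `1`
for all `i` at once. This is Kronecker's theorem for the line `t ↦ t • Δ⁻¹` in the torus, proved
by Bohr's averaging argument: by the independence of the `(Δ i)⁻¹`, the constant term is the only
zero frequency of `∏ i, sin (π t / Δ i) ^ (2N)`, so its mean over `[0, T]` tends to
`(centralBinom N / 4 ^ N) ^ r`, which for large `N` exceeds `q ^ N` for any fixed `q < 1`.
-/

open Finset Filter Real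
open Complex (I)

noncomputable def sinPowCoeff (N k : ℕ) : ℂ := (-1) ^ (N + k) * (2 * N).choose k / 4 ^ N

theorem sin_pow_two_mul_eq_sum (N : ℕ) (z : ℂ) :
    Complex.sin z ^ (2 * N) =
      ∑ k ∈ range (2 * N + 1), sinPowCoeff N k * Complex.exp ((2 * N - 2 * k) * z * I) := by
  rw [Complex.sin, div_pow, mul_pow, sub_pow, sum_mul, sum_div]
  refine sum_congr rfl fun k hk => ?_
  have hk : k ≤ 2 * N := Nat.lt_succ_iff.mp (mem_range.mp hk)
  have hexp : Complex.exp (-z * I) ^ k * Complex.exp (z * I) ^ (2 * N - k) =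
      Complex.exp ((2 * N - 2 * k) * z * I) := by
    rw [← Complex.exp_nat_mul, ← Complex.exp_nat_mul, ← Complex.exp_add]
    push_cast [Nat.cast_sub hk]
    ring_nf
  have hI : I ^ (2 * N) = (-1) ^ N := by rw [pow_mul, Complex.I_sq]
  have h2 : (2 : ℂ) ^ (2 * N) = 4 ^ N := by rw [pow_mul]; norm_num
  rw [sinPowCoeff, hI, h2, ← hexp, pow_add, pow_add, pow_mul, neg_one_sq, one_pow]
  ring

theorem prod_sin_pow_eq_sum_exp {ι : Type*} [Fintype ι] [DecidableEq ι] (N : ℕ) (α : ι → ℝ)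
    (t : ℝ) :
    ((∏ i, sin (π * α i * t) ^ (2 * N) : ℝ) : ℂ) =
      ∑ κ ∈ Fintype.piFinset fun _ => range (2 * N + 1), (∏ i, sinPowCoeff N (κ i)) *
        Complex.exp (↑(2 * π * ∑ i, ((N : ℝ) - κ i) * α i) * t * I) := by
  push_cast
  simp_rw [sin_pow_two_mul_eq_sum]
  rw [prod_univ_sum]
  refine sum_congr rfl fun κ _ => ?_
  rw [prod_mul_distrib, ← Complex.exp_sum, mul_sum, sum_mul, sum_mul]
  congr 2
  refine sum_congr rfl fun i _ => ?_
  ring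

theorem norm_integral_exp_mul_I_le {a : ℝ} (ha : a ≠ 0) (T : ℝ) :
    ‖∫ t in (0)..T, Complex.exp (a * t * I)‖ ≤ 2 / |a| := by
  have haI : (a : ℂ) * I ≠ 0 := mul_ne_zero (Complex.ofReal_ne_zero.mpr ha) Complex.I_ne_zero
  have hnorm : ∀ t : ℝ, ‖Complex.exp (a * I * t)‖ = 1 := fun t => by
    rw [mul_right_comm, ← Complex.ofReal_mul, Complex.norm_exp_ofReal_mul_I]
  simp_rw [mul_right_comm _ _ I]
  rw [integral_exp_mul_complex haI, norm_div, norm_mul, Complex.norm_I, mul_one,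
    Complex.norm_real, norm_eq_abs]
  gcongr
  calc _ ≤ ‖Complex.exp (a * I * T)‖ + ‖Complex.exp (a * I * (0 : ℝ))‖ := norm_sub_le _ _
    _ = 2 := by rw [hnorm, hnorm]; norm_num

theorem norm_integral_sum_exp_sub_le {κ : Type*} (s : Finset κ) (a : κ → ℂ) (lam : κ → ℝ)
    (T : ℝ) :
    ‖(∫ t in (0)..T, ∑ j ∈ s, a j * Complex.exp (lam j * t * I)) -
        (∑ j ∈ s with lam j = 0, a j) * T‖ ≤ ∑ j ∈ s with lam j ≠ 0, ‖a j‖ * (2 / |lam j|) := by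
  have hint : ∀ j, IntervalIntegrable (fun t : ℝ => a j * Complex.exp (lam j * t * I))
      MeasureTheory.volume 0 T := fun j => by
    apply Continuous.intervalIntegrable
    fun_prop
  rw [intervalIntegral.integral_finsetSum fun j _ => hint j,
    ← sum_filter_add_sum_filter_not s fun j => lam j = 0, sum_mul, add_sub_right_comm,
    ← sum_sub_distrib, sum_eq_zero fun j hj => by simp [(mem_filter.mp hj).2, mul_comm], zero_add]
  refine (norm_sum_le _ _).trans (sum_le_sum fun j hj => ?_)
  rw [intervalIntegral.integral_const_mul, norm_mul]
  exact mul_le_mul_of_nonneg_left (norm_integral_exp_mul_I_le (mem_filter.mp hj).2 T)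
    (norm_nonneg _)

theorem sum_sub_mul_eq_zero_iff {ι : Type*} [Fintype ι] {α : ι → ℝ} (hα : LinearIndependent ℤ α)
    (N : ℕ) (κ : ι → ℕ) : ∑ i, ((N : ℝ) - κ i) * α i = 0 ↔ κ = fun _ => N := by
  refine ⟨fun h => funext fun i => ?_, fun h => by simp [h]⟩
  have := Fintype.linearIndependent_iff.mp hα (fun i => (N : ℤ) - κ i) (by simpa using h) i
  omega

theorem exists_le_integral_prod_sin_pow {ι : Type*} [Fintype ι] {α : ι → ℝ}
    (hα : LinearIndependent ℤ α) (N : ℕ) :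
    ∃ C, ∀ T, (((2 * N).choose N : ℝ) / 4 ^ N) ^ Fintype.card ι * T - C ≤
      ∫ t in (0)..T, ∏ i, sin (π * α i * t) ^ (2 * N) := by
  classical
  set s := Fintype.piFinset fun _ : ι => range (2 * N + 1)
  set a : (ι → ℕ) → ℂ := fun κ => ∏ i, sinPowCoeff N (κ i)
  set lam : (ι → ℕ) → ℝ := fun κ => 2 * π * ∑ i, ((N : ℝ) - κ i) * α i
  refine ⟨∑ κ ∈ s with lam κ ≠ 0, ‖a κ‖ * (2 / |lam κ|), fun T => ?_⟩
  have hzero : {κ ∈ s | lam κ = 0} = {fun _ => N} := by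
    have hmem : (fun _ => N) ∈ s := Fintype.mem_piFinset.mpr fun _ => by simp; omega
    simp_rw [lam, mul_eq_zero, two_ne_zero, pi_ne_zero, false_or, sum_sub_mul_eq_zero_iff hα,
      filter_eq', if_pos hmem]
  have hmean : ∑ κ ∈ s with lam κ = 0, a κ =
      (((((2 * N).choose N : ℝ) / 4 ^ N) ^ Fintype.card ι : ℝ) : ℂ) := by
    simp [hzero, a, sinPowCoeff, ← two_mul, pow_mul, div_pow]
  have hbound := norm_integral_sum_exp_sub_le s a lam T
  rw [hmean, ← intervalIntegral.integral_congr fun t _ => prod_sin_pow_eq_sum_exp N α t,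
    intervalIntegral.integral_ofReal, ← Complex.ofReal_mul,
    ← Complex.ofReal_sub, Complex.norm_real, norm_eq_abs] at hbound
  linarith [neg_abs_le ((∫ t in (0)..T, ∏ i, sin (π * α i * t) ^ (2 * N)) -
    (((2 * N).choose N : ℝ) / 4 ^ N) ^ Fintype.card ι * T)]

theorem frequently_lt_of_le_integral {f : ℝ → ℝ} (hf : Continuous f) {a b C : ℝ} (hba : b < a)
    (h : ∀ T, a * T - C ≤ ∫ t in (0)..T, f t) : ∃ᶠ t in atTop, b < f t := by
  by_contra hfreq
  obtain ⟨T₀, hT₀⟩ := eventually_atTop.mp (not_frequently.mp hfreq)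
  set M := ∫ t in (0)..T₀, f t
  have hupper : ∀ T ≥ T₀, (∫ t in (0)..T, f t) ≤ M + b * (T - T₀) := fun T hT => by
    rw [← intervalIntegral.integral_add_adjacent_intervals (hf.intervalIntegrable 0 T₀)
      (hf.intervalIntegrable T₀ T)]
    have := intervalIntegral.integral_mono_on (μ := MeasureTheory.volume) hT
      (hf.intervalIntegrable T₀ T) intervalIntegrable_const fun t ht => not_lt.mp (hT₀ t ht.1)
    simp only [intervalIntegral.integral_const, smul_eq_mul] at this
    linarith
  set T := max T₀ ((C + M - b * T₀ + 1) / (a - b))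
  have hT : (a - b) * T ≥ C + M - b * T₀ + 1 := by
    rw [ge_iff_le, ← div_le_iff₀' (sub_pos.mpr hba)]
    exact le_max_right _ _
  linarith [h T, hupper T (le_max_left _ _)]

theorem exists_pow_lt_centralBinom_div_pow (r : ℕ) {q : ℝ} (hq₀ : 0 ≤ q) (hq : q < 1) :
    ∃ N : ℕ, q ^ N < (((2 * N).choose N : ℝ) / 4 ^ N) ^ r := by
  obtain ⟨N, hsmall, hN⟩ := ((tendsto_pow_const_mul_const_pow_of_lt_one r hq₀ hq).eventually
    (gt_mem_nhds one_pos) |>.and (eventually_ge_atTop 4)).exists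
  refine ⟨N, ?_⟩
  have hNpos : (0 : ℝ) < N := by exact_mod_cast (by omega : 0 < N)
  have hbinom : (N : ℝ)⁻¹ ≤ ((2 * N).choose N : ℝ) / 4 ^ N := by
    rw [inv_eq_one_div, div_le_div_iff₀ hNpos (by positivity), one_mul, mul_comm,
      ← Nat.centralBinom_eq_two_mul_choose]
    exact_mod_cast (Nat.four_pow_lt_mul_centralBinom N hN).le
  calc q ^ N < 1 / (N : ℝ) ^ r := by rwa [lt_div_iff₀ (by positivity), mul_comm]
    _ = (N : ℝ)⁻¹ ^ r := by rw [one_div, inv_pow]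
    _ ≤ _ := pow_le_pow_left₀ (by positivity) hbinom r

theorem frequently_forall_lt_sin_sq {ι : Type*} [Fintype ι] {α : ι → ℝ}
    (hα : LinearIndependent ℤ α) {q : ℝ} (hq : q < 1) :
    ∃ᶠ t in atTop, ∀ i, q < sin (π * α i * t) ^ 2 := by
  classical
  obtain ⟨N, hN⟩ := exists_pow_lt_centralBinom_div_pow (Fintype.card ι) (le_max_right q 0)
    (max_lt hq one_pos)
  obtain ⟨C, hC⟩ := exists_le_integral_prod_sin_pow hα N
  refine (frequently_lt_of_le_integral (by fun_prop) hN hC).mono fun t ht i => ?_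
  have hfactor : ∏ j, sin (π * α j * t) ^ (2 * N) ≤ (sin (π * α i * t) ^ 2) ^ N := by
    rw [← mul_prod_erase univ _ (mem_univ i), pow_mul]
    refine mul_le_of_le_one_right (by positivity) (prod_le_one (fun j _ => ?_) fun j _ => ?_)
    · rw [pow_mul]; positivity
    · rw [pow_mul]; exact pow_le_one₀ (sq_nonneg _) (sin_sq_le_one _)
  exact (le_max_left q 0).trans_lt
    (lt_of_pow_lt_pow_left₀ N (sq_nonneg _) (ht.trans_le hfactor))

theorem exists_odd_abs_two_mul_sub_lt {y η : ℝ} (hy : 0 ≤ y) (hη₀ : 0 ≤ η) (hη : η ≤ 1 / 2)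
    (h : cos (π * η) ^ 2 < sin (π * y) ^ 2) :
    ∃ k : ℕ, Odd k ∧ |2 * y - k| < 2 * η := by
  set m : ℤ := round (y - 1 / 2)
  set θ : ℝ := y - 1 / 2 - m with hθ_def
  have hθ : |θ| ≤ 1 / 2 := abs_sub_round _
  have hsin : sin (π * y) ^ 2 = cos (π * |θ|) ^ 2 := by
    rw [show π * y = π * θ + π / 2 + m * π by rw [hθ_def]; ring, sin_add_int_mul_pi,
      sin_add_pi_div_two, ← sq_abs, abs_mul, abs_neg_one_zpow, one_mul, sq_abs,
      show π * |θ| = |π * θ| by rw [abs_mul, abs_of_pos pi_pos], cos_abs]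
  have hθη : |θ| < η := by
    have hmem : ∀ x, 0 ≤ x → x ≤ 1 / 2 → π * x ∈ Set.Icc 0 π := fun x h₀ h₁ =>
      ⟨by positivity, by nlinarith [pi_pos]⟩
    have hcos : ∀ x, 0 ≤ x → x ≤ 1 / 2 → 0 ≤ cos (π * x) := fun x h₀ h₁ =>
      cos_nonneg_of_mem_Icc ⟨by nlinarith [pi_pos], by nlinarith [pi_pos]⟩
    rw [hsin, sq_lt_sq₀ (hcos η hη₀ hη) (hcos _ (abs_nonneg θ) hθ),
      strictAntiOn_cos.lt_iff_gt (hmem η hη₀ hη) (hmem _ (abs_nonneg θ) hθ)] at h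
    exact lt_of_mul_lt_mul_left h pi_pos.le
  have hm : 0 ≤ m := by
    have : (-1 : ℝ) < m := by linarith [(abs_lt.mp (hθη.trans_le hη)).2]
    have : (-1 : ℤ) < m := by exact_mod_cast this
    omega
  refine ⟨2 * m.toNat + 1, odd_two_mul_add_one _, ?_⟩
  have hk : ((2 * m.toNat + 1 : ℕ) : ℝ) = 2 * m + 1 := by
    push_cast; rw [← Int.cast_natCast, Int.toNat_of_nonneg hm]
  rw [hk, show 2 * y - (2 * m + 1) = 2 * θ by rw [hθ_def]; ring, abs_mul, abs_two]
  linarith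

theorem exists_forall_odd_mul_near {ι : Type*} [Fintype ι] {Δ : ι → ℝ} (hΔ : ∀ i, 0 < Δ i)
    (hind : LinearIndependent ℤ fun i => (Δ i)⁻¹) {δ : ℝ} (hδ : 0 < δ) :
    ∃ T, ∀ i, ∃ k : ℕ, Odd k ∧ |k * Δ i - T| < δ := by
  obtain ⟨E, hΔE⟩ := Finite.exists_le Δ
  set η := min (1 / 2) (δ / (2 * max E 1))
  have hη₀ : 0 < η := lt_min one_half_pos (by positivity)
  have hq : cos (π * η) ^ 2 < 1 := by
    rw [← sin_sq_add_cos_sq (π * η), lt_add_iff_pos_left]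
    exact pow_pos (sin_pos_of_pos_of_lt_pi (by positivity)
      (by nlinarith [pi_pos, min_le_left (1 / 2) (δ / (2 * max E 1))])) 2
  obtain ⟨t, ht₀, ht⟩ := (frequently_forall_lt_sin_sq hind hq).forall_exists_of_atTop 0
  refine ⟨2 * t, fun i => ?_⟩
  have hΔi := hΔ i
  obtain ⟨k, hodd, hk⟩ := exists_odd_abs_two_mul_sub_lt (mul_nonneg (inv_pos.mpr hΔi).le ht₀)
    hη₀.le (min_le_left _ _) (by simpa only [mul_assoc] using ht i)
  refine ⟨k, hodd, ?_⟩
  calc |k * Δ i - 2 * t| = Δ i * |2 * ((Δ i)⁻¹ * t) - k| := by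
        rw [← abs_of_pos hΔi, ← abs_mul, ← abs_neg, abs_of_pos hΔi]
        congr 1
        field_simp
        ring
    _ < max E 1 * (2 * η) := mul_lt_mul_of_le_of_lt_of_nonneg_of_pos
        ((hΔE i).trans (le_max_left E 1)) hk (abs_nonneg _) (by positivity)
    _ ≤ max E 1 * (2 * (δ / (2 * max E 1))) := by gcongr; exact min_le_right _ _
    _ = δ := by field_simp

theorem perfect_reeb_stmt10_general (r : ℕ) (c ε : ℝ)
    (hε : 0 < ε) (Δ : Fin r → ℝ) (hΔ : ∀ i, 0 < Δ i)
    (hind : LinearIndependent ℚ (fun i : Fin r => (Δ i)⁻¹))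
    (μ : Fin r → ℕ → ℤ)
    (hμ : ∀ i, ∀ k : ℕ, 0 < k → |(μ i k : ℝ) - (k : ℝ) * Δ i| < c) :
    ∃ k : Fin r → ℕ, (∀ i, Odd (k i)) ∧ (∀ i, 0 < k i) ∧
      ∀ i j, |(μ i (k i) : ℝ) - (μ j (k j) : ℝ)| < 2 * c + ε := by
  obtain ⟨T, hT⟩ := exists_forall_odd_mul_near hΔ (hind.restrict_scalars' ℤ) (half_pos hε)
  choose k hodd hk using hT
  have hnear : ∀ i, |(μ i (k i) : ℝ) - T| < c + ε / 2 := fun i =>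
    calc _ ≤ |(μ i (k i) : ℝ) - k i * Δ i| + |(k i : ℝ) * Δ i - T| := abs_sub_le _ _ _
      _ < c + ε / 2 := add_lt_add (hμ i (k i) (hodd i).pos) (hk i)
  refine ⟨k, hodd, fun i => (hodd i).pos, fun i j => ?_⟩
  calc _ ≤ |(μ i (k i) : ℝ) - T| + |T - μ j (k j)| := abs_sub_le _ _ _
    _ < c + ε / 2 + (c + ε / 2) := add_lt_add (hnear i) (abs_sub_comm T _ ▸ hnear j)
    _ = 2 * c + ε := by ring

/-- Abstract form of the lemma underlying Theorem 1.8: with `1/Δ₁, …, 1/Δ_r`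
`ℚ`-linearly independent and `|μ_i(k) − kΔ_i| < c` for all positive `k`, one
can find odd positive integers `k₁, …, k_r` such that all `μ_i(k_i)` lie
within `2c + ε` of each other. -/
theorem perfect_reeb_stmt10 (r : ℕ) (hr : 1 ≤ r) (c ε : ℝ) (hc : 0 < c)
    (hε : 0 < ε) (Δ : Fin r → ℝ) (hΔ : ∀ i, 0 < Δ i)
    (hind : LinearIndependent ℚ (fun i : Fin r => (Δ i)⁻¹))
    (μ : Fin r → ℕ → ℤ)
    (hμ : ∀ i, ∀ k : ℕ, 0 < k → |(μ i k : ℝ) - (k : ℝ) * Δ i| < c) :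
    ∃ k : Fin r → ℕ, (∀ i, Odd (k i)) ∧ (∀ i, 0 < k i) ∧
      ∀ i j, |(μ i (k i) : ℝ) - (μ j (k j) : ℝ)| < 2 * c + ε :=
  perfect_reeb_stmt10_general r c ε hε Δ hΔ hind μ hμ
end
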